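/- Let b = Σ_{n≥0} b_n X^n be a formal power series with complex coefficients. Then the following are equivalent: (i) there exists a formal power series c = Σ_{n≥0} c_n X^n with complex coefficients such that b = c̄·c, where c̄ = Σ_{n≥0} conj(c_n) X^n is the series with complex-conjugated coefficients; (ii) every coefficient b_n is real, and either b = 0 or the least index l with b_l ≠ 0 is even and b_l > 0. (Characterization of positivity for formal power series, used for positivity of the interacting two-point function.) -/

import Mathlib

/-!
If `c = X^m d` with `d(0) ≠ 0`, then `c̄ c = X^(2m) d̄ d` is fixed by conjugation and has leading
coefficient `|d(0)|² > 0`. Conversely, if `b` has real coefficients and leading term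
`b_(2m) X^(2m)` with `b_(2m) > 0`, then `b = X^(2m) a` for a real series `a` with `a(0) > 0`;
by Hensel's lemma in the `X`-adically complete ring `ℝ⟦X⟧`, `a = f²` for a real series `f`,
and `c = X^m f` satisfies `c̄ = c`, so `c̄ c = b`.
-/

open PowerSeries

namespace PowerSeries

theorem coeff_X_pow_mul_self {R : Type*} [Semiring R] (e : R⟦X⟧) (l : ℕ) :
    coeff l (X ^ l * e) = constantCoeff e := by
  simpa using coeff_X_pow_mul e l 0

theorem isSquare_of_constantCoeff_eq_mul_self {R : Type*} [CommRing R] {a : R⟦X⟧} {s : R}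
    (hs : IsUnit (2 * s)) (h : constantCoeff a = s * s) : IsSquare a := by
  obtain ⟨r, hr, -⟩ := HenselianRing.is_henselian (I := Ideal.span {(X : R⟦X⟧)})
    (Polynomial.X ^ 2 - Polynomial.C a) (Polynomial.monic_X_pow_sub_C a two_ne_zero) (C s)
    (by rw [Ideal.mem_span_singleton, X_dvd_iff]; simp [h, sq])
    (by
      convert (hs.map C).map (Ideal.Quotient.mk (Ideal.span {(X : R⟦X⟧)})) using 2
      simp [one_add_one_eq_two, map_ofNat])
  exact ⟨r, by simpa [sub_eq_zero, sq, eq_comm] using hr⟩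

section StarRing

variable {R : Type*} [CommSemiring R] [StarRing R]

theorem map_star_map_star_mul_self (c : R⟦X⟧) :
    map (starRingEnd R) (map (starRingEnd R) c * c) = map (starRingEnd R) c * c := by
  rw [map_mul, mul_comm]
  congr
  ext n
  simp

theorem map_star_mul_self_eq_X_pow_mul (c : R⟦X⟧) :
    map (starRingEnd R) c * c =
      X ^ (2 * c.order.toNat) * (map (starRingEnd R) c.divXPowOrder * c.divXPowOrder) := by
  conv_lhs => rw [← X_pow_order_mul_divXPowOrder (f := c)]
  rw [map_mul, map_pow, map_X]
  ring

theorem coeff_two_mul_order_map_star_mul_self (c : R⟦X⟧) :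
    coeff (2 * c.order.toNat) (map (starRingEnd R) c * c) =
      starRingEnd R (coeff c.order.toNat c) * coeff c.order.toNat c := by
  rw [map_star_mul_self_eq_X_pow_mul, coeff_X_pow_mul_self, map_mul,
    ← coeff_zero_eq_constantCoeff_apply, coeff_map, coeff_zero_eq_constantCoeff_apply,
    constantCoeff_divXPowOrder]

end StarRing

theorem isSquare_of_even_of_coeff_pos {a : ℝ⟦X⟧} {l : ℕ} (hl : Even l)
    (hlow : ∀ k < l, coeff k a = 0) (hpos : 0 < coeff l a) : IsSquare a := by
  obtain ⟨m, rfl⟩ := hl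
  obtain ⟨e, rfl⟩ := X_pow_dvd_iff.mpr hlow
  rw [coeff_X_pow_mul_self] at hpos
  obtain ⟨f, rfl⟩ := isSquare_of_constantCoeff_eq_mul_self (s := √(constantCoeff e))
    (by simpa using (Real.sqrt_pos.mpr hpos).ne') (Real.mul_self_sqrt hpos.le).symm
  exact ⟨X ^ m * f, by ring⟩

theorem exists_eq_map_ofReal {b : ℂ⟦X⟧} (h : ∀ n, ∃ r : ℝ, coeff n b = r) :
    ∃ a : ℝ⟦X⟧, b = map Complex.ofRealHom a := by
  choose r hr using h
  exact ⟨mk r, by ext n; simp [hr]⟩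

theorem map_conj_map_ofReal (f : ℝ⟦X⟧) :
    map (starRingEnd ℂ) (map Complex.ofRealHom f) = map Complex.ofRealHom f := by
  ext n
  simp

end PowerSeries

theorem powerSeries_positivity_characterization (b : PowerSeries ℂ) :
    (∃ c : PowerSeries ℂ, b = PowerSeries.map (starRingEnd ℂ) c * c) ↔
      ((∀ n : ℕ, ∃ r : ℝ, PowerSeries.coeff n b = (r : ℂ)) ∧
        (b = 0 ∨ ∃ l : ℕ, (∀ k < l, PowerSeries.coeff k b = 0) ∧
          PowerSeries.coeff l b ≠ 0 ∧ Even l ∧ 0 < (PowerSeries.coeff l b).re)) := by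
  constructor
  · rintro ⟨c, rfl⟩
    refine ⟨fun n => ⟨_, (Complex.conj_eq_iff_re.mp ?_).symm⟩, ?_⟩
    · rw [← coeff_map, map_star_map_star_mul_self]
    rcases eq_or_ne c 0 with rfl | hc
    · simp
    have hlead : coeff (2 * c.order.toNat) (map (starRingEnd ℂ) c * c) =
        Complex.normSq (coeff c.order.toNat c) := by
      rw [coeff_two_mul_order_map_star_mul_self, Complex.normSq_eq_conj_mul_self]
    have hpos : 0 < Complex.normSq (coeff c.order.toNat c) :=
      Complex.normSq_pos.mpr (coeff_order hc)
    refine .inr ⟨2 * c.order.toNat, fun k hk => ?_, ?_, even_two_mul _, ?_⟩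
    · rw [map_star_mul_self_eq_X_pow_mul, coeff_X_pow_mul', if_neg hk.not_ge]
    · exact hlead ▸ Complex.ofReal_ne_zero.mpr hpos.ne'
    · rwa [hlead, Complex.ofReal_re]
  · rintro ⟨hre, rfl | ⟨l, hlow, -, hl, hpos⟩⟩
    · exact ⟨0, by simp⟩
    obtain ⟨a, rfl⟩ := exists_eq_map_ofReal hre
    obtain ⟨f, rfl⟩ := isSquare_of_even_of_coeff_pos hl
      (fun k hk => by simpa using hlow k hk) (by simpa using hpos)
    exact ⟨map Complex.ofRealHom f, by rw [map_conj_map_ofReal, map_mul]⟩
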